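/- Let Q be a quiver and let Paths(Q) denote its path category, regarded as a locally discrete bicategory. Then every pseudofunctor from Paths(Q) to a bicategory B is isomorphic, via an invertible icon (an identity-component oplax natural transformation all of whose 2-cell components are invertible), to a pseudofunctor whose compositor and unitor constraints are identities on the generating data, i.e. to one induced by the universal property of the path category from a prefunctor Q → B. -/

import Mathlib

/-!
STATEMENT 12: Every pseudofunctor from the path category `Paths Q` of a quiver
`Q` (regarded as a locally discrete bicategory) to a bicategory `B` is
isomorphic, via an invertible icon, to the pseudofunctor induced (by the
universal property of the path category) from a prefunctor `Q ⥤q B`, i.e. the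
canonical pseudofunctor `LocallyDiscrete (Paths Q) ⥤ FreeBicategory Q ⥤ B`
whose compositor and unitor constraints are the canonical (identity on
generating data) ones.

An invertible icon between pseudofunctors consists of an equality of object
maps together with invertible 2-cells comparing the actions on 1-cells,
compatible with 2-cells and with the unitor and compositor constraints.
-/

open CategoryTheory Bicategory

universe w₁ w₂ v₁ v₂ u₁ u₂ v u

section HomCast

variable {C : Type u₂} [Bicategory.{w₂, v₂} C]

/-- Transport a 1-cell along equalities of its endpoints. -/
def homCast {a a' b b' : C} (ha : a = a') (hb : b = b') (f : a ⟶ b) : a' ⟶ b' := by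
  subst ha; subst hb; exact f

lemma homCast_id {a a' : C} (ha : a = a') : homCast ha ha (𝟙 a) = 𝟙 a' := by
  subst ha; rfl

lemma homCast_comp {a a' b b' c c' : C} (ha : a = a') (hb : b = b') (hc : c = c')
    (f : a ⟶ b) (g : b ⟶ c) :
    homCast ha hc (f ≫ g) = homCast ha hb f ≫ homCast hb hc g := by
  subst ha; subst hb; subst hc; rfl

/-- Transport a 2-cell along equalities of the endpoints of its boundary. -/
def homCast₂ {a a' b b' : C} (ha : a = a') (hb : b = b') {f g : a ⟶ b} (η : f ⟶ g) :
    homCast ha hb f ⟶ homCast ha hb g := by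
  subst ha; subst hb; exact η

end HomCast

/-- An invertible icon between pseudofunctors `F` and `G`: the object maps agree,
and there are invertible 2-cells `F.map f ≅ G.map f` (modulo transport along the
object equalities) that are natural in 2-cells and compatible with the unitor
and compositor constraints of `F` and `G`. -/
structure InvIcon {J : Type u₁} [Bicategory.{w₁, v₁} J] {C : Type u₂} [Bicategory.{w₂, v₂} C]
    (F G : Pseudofunctor J C) where
  objEq : ∀ a : J, F.obj a = G.obj a
  app : ∀ {a b : J} (f : a ⟶ b),
    F.map f ≅ homCast (objEq a).symm (objEq b).symm (G.map f)
  naturality : ∀ {a b : J} {f g : a ⟶ b} (η : f ⟶ g),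
    (app f).hom ≫ homCast₂ (objEq a).symm (objEq b).symm (G.map₂ η) =
      F.map₂ η ≫ (app g).hom
  icon_id : ∀ a : J, (app (𝟙 a)).hom =
    (F.mapId a).hom ≫ eqToHom (homCast_id (objEq a).symm).symm ≫
      homCast₂ (objEq a).symm (objEq a).symm (G.mapId a).inv
  icon_comp : ∀ {a b c : J} (f : a ⟶ b) (g : b ⟶ c),
    (app (f ≫ g)).hom =
      (F.mapComp f g).hom ≫ ((app f).hom ▷ F.map g) ≫
        (homCast (objEq a).symm (objEq b).symm (G.map f) ◁ (app g).hom) ≫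
        eqToHom (homCast_comp (objEq a).symm (objEq b).symm (objEq c).symm
          (G.map f) (G.map g)).symm ≫
        homCast₂ (objEq a).symm (objEq c).symm (G.mapComp f g).inv


namespace StrictifyAux

open Quiver

variable {Q : Type u} [Quiver.{v + 1} Q] {C : Type u₂} [Bicategory.{w₂, v₂} C]
variable (F : Pseudofunctor (LocallyDiscrete (Paths Q)) C)

/-- The generating prefunctor extracted from `F`. -/
def genPrefunctor : Prefunctor Q C where
  obj a := F.obj ⟨a⟩
  map e := F.map ⟨e.toPath⟩

/-- The strictified pseudofunctor. -/
def strictF : Pseudofunctor (LocallyDiscrete (Paths Q)) C :=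
  (FreeBicategory.inclusion Q).comp (FreeBicategory.lift (genPrefunctor F))

/-- The 1-cell of `LocallyDiscrete (Paths Q)` given by a path. -/
abbrev pmk {x y : Q} (p : Quiver.Path x y) :
    (⟨x⟩ : LocallyDiscrete (Paths Q)) ⟶ ⟨y⟩ := ⟨p⟩

/-- The icon component at a single edge. -/
def single {x y : Q} (e : x ⟶ y) :
    F.map (pmk e.toPath) ≅ (strictF F).map (pmk e.toPath) := by
  exact (λ_ (F.map (pmk e.toPath))).symm

/-- The icon components, by recursion on paths. -/
def appAux : ∀ {x y : Q} (p : Quiver.Path x y), F.map (pmk p) ≅ (strictF F).map (pmk p)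
  | x, _, .nil => by exact F.mapId ⟨x⟩ ≪≫ ((strictF F).mapId ⟨x⟩).symm
  | _, _, .cons p e => by
      exact F.mapComp (pmk p) (pmk e.toPath) ≪≫
        whiskerRightIso (appAux p) (F.map (pmk e.toPath)) ≪≫
        whiskerLeftIso ((strictF F).map (pmk p)) (single F e) ≪≫
        ((strictF F).mapComp (pmk p) (pmk e.toPath)).symm

/-- Any endo-2-cell in a locally discrete bicategory maps to an identity. -/
lemma map₂_eq_id (G : Pseudofunctor (LocallyDiscrete (Paths Q)) C)
    {a b : LocallyDiscrete (Paths Q)} {f : a ⟶ b} (η : f ⟶ f) :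
    G.map₂ η = 𝟙 (G.map f) := by
  have h : η = 𝟙 f := Subsingleton.elim _ _
  rw [h]; exact G.map₂_id f

lemma nil_alg {X Y : C} {f g : X ⟶ Y} {u v : Y ⟶ Y} (φ : f ⟶ g) (i : u ≅ 𝟙 Y) (j : v ≅ 𝟙 Y) :
    φ = (𝟙 f ≫ (ρ_ f).inv ≫ f ◁ i.inv) ≫ φ ▷ u ≫ g ◁ (i.hom ≫ j.inv) ≫ g ◁ j.hom ≫
      (ρ_ g).hom ≫ 𝟙 g := by
  simp only [Category.id_comp, Category.comp_id, Category.assoc, ← whisker_exchange_assoc,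
    Iso.inv_hom_id, whiskerRight_id]
  simp

lemma cons_alg {a0 a1 a2 a3 : C} {fp sp : a0 ⟶ a1} {fq sq : a1 ⟶ a2} {fe se : a2 ⟶ a3}
    {fpq spq : a0 ⟶ a2} {fqe sqe : a1 ⟶ a3} {u v : a0 ⟶ a3}
    (A : u ⟶ fpq ≫ fe) (B : fpq ⟶ fp ≫ fq) (A' : u ⟶ fp ≫ fqe) (B' : fqe ⟶ fq ≫ fe)
    (φp : fp ⟶ sp) (φq : fq ⟶ sq) (s : fe ⟶ se)
    (SBi : sp ≫ sq ⟶ spq) (SAi : spq ≫ se ⟶ v) (SB'i : sq ≫ se ⟶ sqe) (SA'i : sp ≫ sqe ⟶ v)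
    (m : u ⟶ u) (n : v ⟶ v)
    (hF : A ≫ B ▷ fe = m ≫ A' ≫ fp ◁ B' ≫ (α_ fp fq fe).inv) (hm : m = 𝟙 u)
    (hS : SBi ▷ se ≫ SAi = (α_ sp sq se).hom ≫ sp ◁ SB'i ≫ SA'i ≫ n) (hn : n = 𝟙 v) :
    A ≫ (B ≫ φp ▷ fq ≫ sp ◁ φq ≫ SBi) ▷ fe ≫ spq ◁ s ≫ SAi =
      A' ≫ φp ▷ fqe ≫ sp ◁ (B' ≫ φq ▷ fe ≫ sq ◁ s ≫ SB'i) ≫ SA'i := by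
  subst hm hn
  simp only [Category.id_comp, Category.comp_id] at hF hS
  simp only [comp_whiskerRight, Bicategory.whiskerLeft_comp, Category.assoc]
  rw [← whisker_exchange_assoc SBi s, hS, reassoc_of% hF, ← whisker_exchange_assoc φp B']
  bicategory

lemma appAux_comp {x y z : Q} (p : Quiver.Path x y) (q : Quiver.Path y z) :
    (appAux F (p.comp q)).hom =
      (F.mapComp (pmk p) (pmk q)).hom ≫ ((appAux F p).hom ▷ F.map (pmk q)) ≫
        ((strictF F).map (pmk p) ◁ (appAux F q).hom) ≫
        ((strictF F).mapComp (pmk p) (pmk q)).inv := by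
  induction q with
  | nil =>
      show (appAux F p).hom =
        (F.mapComp (pmk p) (𝟙 _)).hom ≫ ((appAux F p).hom ▷ F.map (𝟙 _)) ≫
          ((strictF F).map (pmk p) ◁ (appAux F Quiver.Path.nil).hom) ≫
          ((strictF F).mapComp (pmk p) (𝟙 _)).inv
      erw [F.mapComp_id_right_hom, (strictF F).mapComp_id_right_inv,
        map₂_eq_id F ((ρ_ (pmk p)).hom), map₂_eq_id (strictF F) ((ρ_ (pmk p)).inv)]
      erw [appAux]
      exact nil_alg _ (F.mapId _) ((strictF F).mapId _)
  | cons q e ih =>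
      show (appAux F ((p.comp q).cons e)).hom =
        (F.mapComp (pmk p) (pmk q ≫ pmk e.toPath)).hom ≫
          ((appAux F p).hom ▷ F.map (pmk q ≫ pmk e.toPath)) ≫
          ((strictF F).map (pmk p) ◁ (appAux F (q.cons e)).hom) ≫
          ((strictF F).mapComp (pmk p) (pmk q ≫ pmk e.toPath)).inv
      simp only [appAux, Iso.trans_hom, whiskerRightIso_hom, whiskerLeftIso_hom, Iso.symm_hom]
      erw [Iso.trans_hom, Iso.trans_hom, Iso.trans_hom, whiskerRightIso_hom, ih]
      show (F.mapComp (pmk p ≫ pmk q) (pmk e.toPath)).hom ≫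
          ((F.mapComp (pmk p) (pmk q)).hom ≫ (appAux F p).hom ▷ F.map (pmk q) ≫
            (strictF F).map (pmk p) ◁ (appAux F q).hom ≫
            ((strictF F).mapComp (pmk p) (pmk q)).inv) ▷ F.map (pmk e.toPath) ≫
          (strictF F).map (pmk p ≫ pmk q) ◁ (single F e).hom ≫
          ((strictF F).mapComp (pmk p ≫ pmk q) (pmk e.toPath)).inv =
        (F.mapComp (pmk p) (pmk q ≫ pmk e.toPath)).hom ≫
          (appAux F p).hom ▷ F.map (pmk q ≫ pmk e.toPath) ≫
          (strictF F).map (pmk p) ◁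
            ((F.mapComp (pmk q) (pmk e.toPath)).hom ≫
              (appAux F q).hom ▷ F.map (pmk e.toPath) ≫
              (strictF F).map (pmk q) ◁ (single F e).hom ≫
              ((strictF F).mapComp (pmk q) (pmk e.toPath)).inv) ≫
          ((strictF F).mapComp (pmk p) (pmk q ≫ pmk e.toPath)).inv
      exact cons_alg _ _ _ _ _ _ _ _ _ _ _ _ _
        (F.mapComp_assoc_left_hom (pmk p) (pmk q) (pmk e.toPath)) (map₂_eq_id F _)
        ((strictF F).mapComp_assoc_left_inv (pmk p) (pmk q) (pmk e.toPath))
        (map₂_eq_id (strictF F) _)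

/-- The icon component at an arbitrary 1-cell. -/
def appIcon {a b : LocallyDiscrete (Paths Q)} (f : a ⟶ b) :
    F.map f ≅ (strictF F).map f := by
  exact appAux F f.as

lemma appIcon_natural {a b : LocallyDiscrete (Paths Q)} {f g : a ⟶ b} (η : f ⟶ g) :
    (appIcon F f).hom ≫ (strictF F).map₂ η = F.map₂ η ≫ (appIcon F g).hom := by
  obtain rfl : f = g := LocallyDiscrete.eq_of_hom η
  rw [map₂_eq_id F η, map₂_eq_id (strictF F) η]
  erw [Category.comp_id, Category.id_comp]

/-- Inserting an identity 2-cell in the middle of a composite. -/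
lemma mid_id {X Y : C} {u v w : X ⟶ Y} (x : u ⟶ v) (y : v ⟶ w) :
    x ≫ 𝟙 v ≫ y = x ≫ y := by simp

lemma appIcon_id (a : LocallyDiscrete (Paths Q)) :
    (appIcon F (𝟙 a)).hom =
      (F.mapId a).hom ≫ 𝟙 (𝟙 ((strictF F).obj a)) ≫ ((strictF F).mapId a).inv := by
  obtain ⟨a⟩ := a
  refine Eq.trans ?_ (mid_id (F.mapId ⟨a⟩).hom ((strictF F).mapId ⟨a⟩).inv).symm
  show (appAux F Quiver.Path.nil).hom = _
  erw [appAux]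
  rfl

lemma appIcon_comp {a b c : LocallyDiscrete (Paths Q)} (f : a ⟶ b) (g : b ⟶ c) :
    (appIcon F (f ≫ g)).hom =
      (F.mapComp f g).hom ≫ ((appIcon F f).hom ▷ F.map g) ≫
        ((strictF F).map f ◁ (appIcon F g).hom) ≫
        𝟙 ((strictF F).map f ≫ (strictF F).map g) ≫
        ((strictF F).mapComp f g).inv := by
  obtain ⟨a⟩ := a; obtain ⟨b⟩ := b; obtain ⟨c⟩ := c
  obtain ⟨f⟩ := f; obtain ⟨g⟩ := g
  exact (appAux_comp F f g).trans (congrArg (fun t => _ ≫ _ ≫ t) (mid_id _ _).symm)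

end StrictifyAux

/-- Every pseudofunctor out of the locally discrete bicategory on a path category
is isomorphic via an invertible icon to the pseudofunctor induced from a
prefunctor `Q ⥤q B` via the universal property of the path category. -/
theorem pseudofunctor_from_paths_strictifies
    {Q : Type u} [Quiver.{v + 1} Q] {C : Type u₂} [Bicategory.{w₂, v₂} C]
    (F : Pseudofunctor (LocallyDiscrete (Paths Q)) C) :
    ∃ φ : Prefunctor Q C,
      Nonempty (InvIcon F
        ((FreeBicategory.inclusion Q).comp (FreeBicategory.lift φ))) := by
  refine ⟨StrictifyAux.genPrefunctor F, ⟨?_⟩⟩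
  exact
    { objEq := fun _ => rfl
      app := fun f => by exact StrictifyAux.appIcon F f
      naturality := fun η => by exact StrictifyAux.appIcon_natural F η
      icon_id := fun a => by exact StrictifyAux.appIcon_id F a
      icon_comp := fun f g => by exact StrictifyAux.appIcon_comp F f g }
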